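/- arXiv:0906.2989 — 2 statements merged into one kernel-verified Lean document; each statement's English description precedes it below -/
import Mathlib

section
/- Let X be a Banach space and Y a closed subspace. Then there exists a continuous (not necessarily linear) map H : Y* → X* and a constant M ≥ 1 such that H(y*)(y) = y*(y) for every y* ∈ Y* and y ∈ Y, and ‖H(y*)‖_{X*} ≤ M‖y*‖_{Y*} for every y* ∈ Y*. -/
/-!
Restriction `X* → Y*` is a bounded linear surjection, and by Hahn–Banach every `φ ∈ Y*` has a
preimage of the same norm. Any such surjection `T : E → F` from a Banach space has a continuous,
linearly bounded right inverse (Bartle–Graves): on `F \ {0}` a partition of unity glues local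
preimages into a continuous `g` with `‖T (g y) - y‖ ≤ ‖y‖ / 2` and `‖g y‖ ≤ 2C‖y‖`; iterating the
correction `r ↦ r - T (g r)` halves the error at each step, so `y ↦ ∑ₙ g (rₙ y)` is an exact
selection, continuous because the series converges uniformly on bounded sets.
-/

open Set Metric Filter Topology

open Classical in
lemma continuous_dite_eq_zero_of_norm_le {E F : Type*} [NormedAddCommGroup E]
    [NormedAddCommGroup F] {g : ({0}ᶜ : Set F) → E} (hg : Continuous g) (K : ℝ)
    (hgK : ∀ y, ‖g y‖ ≤ K * ‖(y : F)‖) :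
    Continuous fun y : F => if h : y = 0 then 0 else g ⟨y, h⟩ := by
  set G : F → E := fun y => if h : y = 0 then 0 else g ⟨y, h⟩
  have hGK : ∀ y, ‖G y‖ ≤ K * ‖y‖ := by
    intro y
    by_cases h : y = 0
    · simp [G, h]
    · simpa [G, h] using hgK ⟨y, h⟩
  refine continuous_iff_continuousAt.2 fun y₀ => ?_
  rcases eq_or_ne y₀ 0 with rfl | hy₀
  · have : Tendsto (fun y : F => K * ‖y‖) (𝓝 0) (𝓝 0) := by
      simpa using (continuous_norm.tendsto (0 : F)).const_mul K
    simpa [ContinuousAt, G] using squeeze_zero_norm hGK this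
  · have hGg : ({0}ᶜ : Set F).domRestrict G = g := funext fun y => dif_neg y.2
    have : ContinuousOn G {0}ᶜ := continuousOn_iff_continuous_domRestrict.2 (hGg ▸ hg)
    exact this.continuousAt (isOpen_compl_singleton.mem_nhds hy₀)

section

variable {E F : Type*} [NormedAddCommGroup E] [NormedSpace ℝ E]
  [NormedAddCommGroup F] [NormedSpace ℝ F]

lemma exists_continuous_approx_rightInverse (T : E →L[ℝ] F) {C : ℝ} (hC : 0 ≤ C)
    (hT : ∀ y, ∃ x, T x = y ∧ ‖x‖ ≤ C * ‖y‖) :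
    ∃ g : F → E, Continuous g ∧ ∀ y, ‖T (g y) - y‖ ≤ ‖y‖ / 2 ∧ ‖g y‖ ≤ 2 * C * ‖y‖ := by
  let t : ({0}ᶜ : Set F) → Set E := fun y =>
    T ⁻¹' closedBall (y : F) (‖(y : F)‖ / 2) ∩ closedBall 0 (2 * C * ‖(y : F)‖)
  have ht : ∀ y, Convex ℝ (t y) := fun y =>
    ((convex_closedBall _ _).linear_preimage T.toLinearMap).inter (convex_closedBall _ _)
  -- a preimage of `y₀` of norm `≤ C‖y₀‖` is admissible for every `y` with `‖y - y₀‖ < ‖y₀‖ / 3`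
  have hloc : ∀ y₀ : ({0}ᶜ : Set F), ∃ c : E, ∀ᶠ y in 𝓝 y₀, c ∈ t y := by
    intro y₀
    obtain ⟨c, hTc, hc⟩ := hT y₀
    have hy₀ : 0 < ‖(y₀ : F)‖ := norm_pos_iff.2 y₀.2
    have hnear : ∀ᶠ y : ({0}ᶜ : Set F) in 𝓝 y₀, dist (y : F) y₀ < ‖(y₀ : F)‖ / 3 :=
      continuous_subtype_val.continuousAt.eventually (ball_mem_nhds _ (by linarith))
    refine ⟨c, hnear.mono fun y hy => ?_⟩
    rw [dist_eq_norm] at hy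
    have htri : ‖(y₀ : F)‖ ≤ ‖(y : F) - y₀‖ + ‖(y : F)‖ := by
      simpa [norm_sub_rev] using norm_sub_le_norm_sub_add_norm_sub (y₀ : F) y 0
    refine ⟨?_, ?_⟩
    · rw [mem_preimage, mem_closedBall, dist_eq_norm, hTc, norm_sub_rev]
      linarith
    · rw [mem_closedBall_zero_iff]
      nlinarith
  classical
  obtain ⟨g, hg⟩ := exists_continuous_forall_mem_convex_of_local_const ht hloc
  have hg' : ∀ y, ‖T (g y) - y‖ ≤ ‖(y : F)‖ / 2 ∧ ‖g y‖ ≤ 2 * C * ‖(y : F)‖ := fun y => by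
    simpa [t, dist_eq_norm] using hg y
  refine ⟨fun y => if h : y = 0 then 0 else g ⟨y, h⟩,
    continuous_dite_eq_zero_of_norm_le g.continuous _ fun y => (hg' y).2, fun y => ?_⟩
  by_cases h : y = 0
  · simp [h]
  · simpa [h] using hg' ⟨y, h⟩

namespace BartleGraves

variable (T : E →L[ℝ] F) (g : F → E)

def residual (n : ℕ) : F → F := (fun y => y - T (g y))^[n]

lemma residual_zero (y : F) : residual T g 0 y = y := rfl

lemma residual_succ (n : ℕ) (y : F) :
    residual T g (n + 1) y = residual T g n y - T (g (residual T g n y)) :=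
  Function.iterate_succ_apply' _ n y

variable {T g}

lemma continuous_residual (hg : Continuous g) (n : ℕ) : Continuous (residual T g n) :=
  (continuous_id.sub (T.continuous.comp hg)).iterate n

lemma norm_residual_le (hTg : ∀ y, ‖T (g y) - y‖ ≤ ‖y‖ / 2) (n : ℕ) (y : F) :
    ‖residual T g n y‖ ≤ (1 / 2) ^ n * ‖y‖ := by
  induction n with
  | zero => simp [residual_zero]
  | succ n ih =>
    rw [residual_succ, norm_sub_rev, pow_succ]
    linarith [hTg (residual T g n y)]

lemma tendsto_residual (hTg : ∀ y, ‖T (g y) - y‖ ≤ ‖y‖ / 2) (y : F) :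
    Tendsto (fun n => residual T g n y) atTop (𝓝 0) := by
  refine squeeze_zero_norm (norm_residual_le hTg · y) ?_
  simpa using (tendsto_pow_atTop_nhds_zero_of_lt_one (r := (1 / 2 : ℝ))
    (by norm_num) (by norm_num)).mul_const ‖y‖

lemma sum_range_map_residual (n : ℕ) (y : F) :
    ∑ i ∈ Finset.range n, T (g (residual T g i y)) = y - residual T g n y := by
  induction n with
  | zero => simp [residual_zero]
  | succ n ih =>
    rw [Finset.sum_range_succ, ih, residual_succ]
    abel

lemma norm_residual_term_le {K : ℝ} (hK : 0 ≤ K) (hTg : ∀ y, ‖T (g y) - y‖ ≤ ‖y‖ / 2)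
    (hgK : ∀ y, ‖g y‖ ≤ K * ‖y‖) (n : ℕ) (y : F) :
    ‖g (residual T g n y)‖ ≤ K * ‖y‖ * (1 / 2) ^ n :=
  calc ‖g (residual T g n y)‖ ≤ K * ‖residual T g n y‖ := hgK _
    _ ≤ K * ((1 / 2) ^ n * ‖y‖) := mul_le_mul_of_nonneg_left (norm_residual_le hTg n y) hK
    _ = K * ‖y‖ * (1 / 2) ^ n := by ring

end BartleGraves

open BartleGraves in
theorem exists_continuous_rightInverse_of_approx [CompleteSpace E] {T : E →L[ℝ] F} {g : F → E}
    {K : ℝ} (hK : 0 ≤ K) (hg : Continuous g) (hTg : ∀ y, ‖T (g y) - y‖ ≤ ‖y‖ / 2)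
    (hgK : ∀ y, ‖g y‖ ≤ K * ‖y‖) :
    ∃ s : F → E, Continuous s ∧ (∀ y, T (s y) = y) ∧ ∀ y, ‖s y‖ ≤ 2 * K * ‖y‖ := by
  have hgeom : Summable fun n : ℕ => (1 / 2 : ℝ) ^ n :=
    summable_geometric_of_lt_one (by norm_num) (by norm_num)
  have hbound := norm_residual_term_le hK hTg hgK
  have hsum (y : F) : Summable fun n => ‖g (residual T g n y)‖ :=
    .of_nonneg_of_le (fun _ => norm_nonneg _) (hbound · y) (hgeom.mul_left _)
  refine ⟨fun y => ∑' n, g (residual T g n y), ?_, fun y => ?_, fun y => ?_⟩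
  · refine continuous_iff_continuousAt.2 fun y₀ => ?_
    have hcont : ContinuousOn (fun y => ∑' n, g (residual T g n y)) (ball 0 (‖y₀‖ + 1)) := by
      refine continuousOn_tsum (fun n => (hg.comp (continuous_residual hg n)).continuousOn)
        (hgeom.mul_left (K * (‖y₀‖ + 1))) fun n y hy => (hbound n y).trans ?_
      rw [mem_ball_zero_iff] at hy
      gcongr
    exact hcont.continuousAt (isOpen_ball.mem_nhds (by simp))
  · have hT := (T.hasSum (hsum y).of_norm.hasSum).tendsto_sum_nat
    simp_rw [sum_range_map_residual] at hT
    exact tendsto_nhds_unique hT (by simpa using tendsto_const_nhds.sub (tendsto_residual hTg y))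
  · calc ‖∑' n, g (residual T g n y)‖ ≤ ∑' n, ‖g (residual T g n y)‖ :=
          norm_tsum_le_tsum_norm (hsum y)
      _ ≤ ∑' n : ℕ, K * ‖y‖ * (1 / 2) ^ n :=
          (hsum y).tsum_le_tsum (hbound · y) (hgeom.mul_left _)
      _ = 2 * K * ‖y‖ := by
          rw [tsum_mul_left, tsum_geometric_of_lt_one (by norm_num) (by norm_num)]
          ring

theorem exists_continuous_rightInverse_of_norm_le [CompleteSpace E] (T : E →L[ℝ] F) {C : ℝ}
    (hC : 0 ≤ C) (hT : ∀ y, ∃ x, T x = y ∧ ‖x‖ ≤ C * ‖y‖) :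
    ∃ s : F → E, Continuous s ∧ (∀ y, T (s y) = y) ∧ ∀ y, ‖s y‖ ≤ 4 * C * ‖y‖ := by
  obtain ⟨g, hg, hgT⟩ := exists_continuous_approx_rightInverse T hC hT
  obtain ⟨s, hs, hTs, hsK⟩ := exists_continuous_rightInverse_of_approx (by positivity) hg
    (fun y => (hgT y).1) fun y => (hgT y).2
  exact ⟨s, hs, hTs, fun y => (hsK y).trans_eq (by ring)⟩

end

theorem stmt_1_general {X : Type*} [NormedAddCommGroup X] [NormedSpace ℝ X]
    (Y : Subspace ℝ X) :
    ∃ (H : (Y →L[ℝ] ℝ) → (X →L[ℝ] ℝ)) (M : ℝ), 1 ≤ M ∧ Continuous H ∧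
      (∀ (φ : Y →L[ℝ] ℝ) (y : Y), H φ (y : X) = φ y) ∧
      (∀ φ : Y →L[ℝ] ℝ, ‖H φ‖ ≤ M * ‖φ‖) := by
  let restrict : (X →L[ℝ] ℝ) →L[ℝ] (Y →L[ℝ] ℝ) :=
    (ContinuousLinearMap.compL ℝ Y X ℝ).flip Y.subtypeL
  have hext (φ : Y →L[ℝ] ℝ) : ∃ ψ, restrict ψ = φ ∧ ‖ψ‖ ≤ 1 * ‖φ‖ := by
    obtain ⟨ψ, hψφ, hψ⟩ := exists_extension_norm_eq Y φ
    exact ⟨ψ, ContinuousLinearMap.ext hψφ, (one_mul ‖φ‖).symm ▸ hψ.le⟩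
  obtain ⟨H, hH, hHext, hHnorm⟩ :=
    exists_continuous_rightInverse_of_norm_le (E := X →L[ℝ] ℝ) (F := Y →L[ℝ] ℝ) restrict
      zero_le_one hext
  refine ⟨H, 4, by norm_num, hH, fun φ y => congrArg (· y) (hHext φ), fun φ => ?_⟩
  simpa using hHnorm φ

/-- Continuous bounded selection of the Hahn–Banach extension operator. -/
theorem stmt_1 {X : Type*} [NormedAddCommGroup X] [NormedSpace ℝ X] [CompleteSpace X]
    (Y : Subspace ℝ X) (hY : IsClosed (Y : Set X)) :
    ∃ (H : (Y →L[ℝ] ℝ) → (X →L[ℝ] ℝ)) (M : ℝ), 1 ≤ M ∧ Continuous H ∧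
      (∀ (φ : Y →L[ℝ] ℝ) (y : Y), H φ (y : X) = φ y) ∧
      (∀ φ : Y →L[ℝ] ℝ, ‖H φ‖ ≤ M * ‖φ‖) :=
  stmt_1_general Y
end

section
/- Let W and Z be Banach spaces and T : W → Z a bounded linear surjection. Then there exists a continuous map B : Z → W and a constant M > 1 such that T(B(z)) = z for every z ∈ Z and ‖B(z)‖ ≤ M‖z‖ for every z ∈ Z. -/
/-!
Since `T` is open, every `z₀ ≠ 0` has a preimage `w` with `‖w‖ ≤ C‖z₀‖`, and the same `w` remains an
approximate preimage of all `z` near `z₀`. The approximation conditions are convex in `w`, so a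
partition of unity on `Z ∖ {0}` glues these local constants into a continuous `g` with
`‖g z‖ ≤ 2C‖z‖` and `‖z - T (g z)‖ ≤ ‖z‖ / 2`; extended by `g 0 = 0`, it is continuous at `0` by the
linear bound. As in the proof of the open mapping theorem, correcting the residual
`r z = z - T (g z)` repeatedly gives the exact continuous selection `B z = ∑ₙ g (rⁿ z)`, which
converges locally uniformly because `‖rⁿ z‖ ≤ 2⁻ⁿ‖z‖`.
-/

open Metric Set Filter Topology

theorem norm_iterate_le_of_norm_le {E : Type*} [SeminormedAddCommGroup E] {r : E → E} {q : ℝ}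
    (hq : 0 ≤ q) (hr : ∀ z, ‖r z‖ ≤ q * ‖z‖) (n : ℕ) (z : E) : ‖r^[n] z‖ ≤ q ^ n * ‖z‖ := by
  induction n with
  | zero => simp
  | succ n ih =>
    rw [Function.iterate_succ_apply', pow_succ', mul_assoc]
    exact (hr _).trans (mul_le_mul_of_nonneg_left ih hq)

theorem continuous_tsum_of_norm_le_mul_norm {E F : Type*} [SeminormedAddCommGroup E]
    [NormedAddCommGroup F] [CompleteSpace F] {f : ℕ → E → F} {u : ℕ → ℝ}
    (hf : ∀ n, Continuous (f n)) (hu₀ : ∀ n, 0 ≤ u n) (hu : Summable u)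
    (hfu : ∀ n z, ‖f n z‖ ≤ u n * ‖z‖) :
    Continuous fun z => ∑' n, f n z := by
  refine continuous_iff_continuousAt.2 fun z₀ => ?_
  have hball : ContinuousOn (fun z => ∑' n, f n z) (ball 0 (‖z₀‖ + 1)) := by
    refine continuousOn_tsum (fun n => (hf n).continuousOn) (hu.mul_right (‖z₀‖ + 1)) ?_
    intro n z hz
    rw [mem_ball_zero_iff] at hz
    exact (hfu n z).trans (mul_le_mul_of_nonneg_left hz.le (hu₀ n))
  exact hball.continuousAt (isOpen_ball.mem_nhds (by simp))

theorem continuous_of_continuousOn_compl_zero_of_norm_le {E F : Type*} [NormedAddCommGroup E]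
    [NormedAddCommGroup F] {g : E → F} {C : ℝ} (hg : ContinuousOn g {0}ᶜ)
    (hgC : ∀ z, ‖g z‖ ≤ C * ‖z‖) : Continuous g := by
  refine continuous_iff_continuousAt.2 fun z => ?_
  rcases eq_or_ne z 0 with rfl | hz
  · have hg0 : g 0 = 0 := norm_le_zero_iff.1 (by simpa using hgC 0)
    rw [ContinuousAt, hg0]
    refine squeeze_zero_norm hgC ?_
    simpa using (by fun_prop : Continuous fun z : E => C * ‖z‖).tendsto 0
  · exact hg.continuousAt (isOpen_compl_singleton.mem_nhds hz)

namespace ContinuousLinearMap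

section

variable {W Z : Type*} [NormedAddCommGroup W] [NormedSpace ℝ W] [CompleteSpace W]
    [NormedAddCommGroup Z] [NormedSpace ℝ Z] [CompleteSpace Z]

theorem exists_continuous_approx_preimage_norm_le (T : W →L[ℝ] Z) (hT : Function.Surjective T)
    {q : ℝ} (hq : 0 < q) :
    ∃ (g : Z → W) (C : ℝ), 0 ≤ C ∧ Continuous g ∧ (∀ z, ‖g z‖ ≤ C * ‖z‖) ∧
      ∀ z, ‖z - T (g z)‖ ≤ q * ‖z‖ := by
  obtain ⟨C, hC, hpre⟩ := T.exists_preimage_norm_le hT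
  set t : ({0}ᶜ : Set Z) → Set W := fun z =>
    closedBall 0 (2 * C * ‖(z : Z)‖) ∩ T ⁻¹' closedBall z (q * ‖(z : Z)‖)
  have ht : ∀ z, Convex ℝ (t z) := fun z =>
    (convex_closedBall _ _).inter ((convex_closedBall _ _).linear_preimage T.toLinearMap)
  have hloc : ∀ z₀, ∃ w : W, ∀ᶠ z in 𝓝 z₀, w ∈ t z := by
    intro z₀
    obtain ⟨w, hTw, hw⟩ := hpre z₀
    have hz₀ : 0 < ‖(z₀ : Z)‖ := norm_pos_iff.2 z₀.2
    refine ⟨w, ?_⟩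
    filter_upwards [continuousAt_const.eventually_lt
        (by fun_prop : Continuous fun z : ({0}ᶜ : Set Z) => 2 * C * ‖(z : Z)‖).continuousAt
        (show ‖w‖ < 2 * C * ‖(z₀ : Z)‖ by nlinarith),
      (by fun_prop : Continuous fun z : ({0}ᶜ : Set Z) => ‖(z : Z) - z₀‖).continuousAt.eventually_lt
        (by fun_prop : Continuous fun z : ({0}ᶜ : Set Z) => q * ‖(z : Z)‖).continuousAt
        (show ‖(z₀ : Z) - z₀‖ < q * ‖(z₀ : Z)‖ by simpa using mul_pos hq hz₀)] with z hzw hzT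
    refine ⟨mem_closedBall_zero_iff.2 hzw.le, ?_⟩
    rw [mem_preimage, mem_closedBall, dist_eq_norm, hTw, norm_sub_rev]
    exact hzT.le
  obtain ⟨f, hf⟩ := exists_continuous_forall_mem_convex_of_local_const ht hloc
  set g : Z → W := Function.extend Subtype.val f 0
  have hg0 : g 0 = 0 := Function.extend_apply' _ _ _ fun ⟨z, hz⟩ => z.2 hz
  have hgf : ∀ z : ({0}ᶜ : Set Z), g z = f z := Subtype.val_injective.extend_apply _ _
  have hgt : ∀ z, ‖g z‖ ≤ 2 * C * ‖z‖ ∧ ‖z - T (g z)‖ ≤ q * ‖z‖ := by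
    intro z
    rcases eq_or_ne z 0 with rfl | hz
    · simp [hg0]
    · obtain ⟨hfC, hfT⟩ := hf ⟨z, hz⟩
      rw [← hgf] at hfC hfT
      rw [mem_closedBall_zero_iff] at hfC
      rw [mem_preimage, mem_closedBall, dist_eq_norm, norm_sub_rev] at hfT
      exact ⟨hfC, hfT⟩
  refine ⟨g, 2 * C, by positivity, ?_, fun z => (hgt z).1, fun z => (hgt z).2⟩
  refine continuous_of_continuousOn_compl_zero_of_norm_le ?_ fun z => (hgt z).1
  rw [continuousOn_iff_continuous_domRestrict]
  convert f.continuous using 1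
  exact funext hgf

end

section

variable {W Z : Type*} [NormedAddCommGroup W] [NormedSpace ℝ W] [CompleteSpace W]
    [NormedAddCommGroup Z] [NormedSpace ℝ Z]

theorem exists_continuous_preimage_norm_le_of_approx (T : W →L[ℝ] Z) {g : Z → W} {C q : ℝ}
    (hC : 0 ≤ C) (hq₀ : 0 ≤ q) (hq₁ : q < 1) (hg : Continuous g) (hgC : ∀ z, ‖g z‖ ≤ C * ‖z‖)
    (hgT : ∀ z, ‖z - T (g z)‖ ≤ q * ‖z‖) :
    ∃ B : Z → W, Continuous B ∧ (∀ z, T (B z) = z) ∧ ∀ z, ‖B z‖ ≤ C / (1 - q) * ‖z‖ := by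
  set r : Z → Z := fun z => z - T (g z)
  have hterm : ∀ n z, ‖g (r^[n] z)‖ ≤ C * q ^ n * ‖z‖ := fun n z => by
    rw [mul_assoc]
    exact (hgC _).trans (mul_le_mul_of_nonneg_left (norm_iterate_le_of_norm_le hq₀ hgT n z) hC)
  have hgeom : HasSum (fun n => C * q ^ n) (C / (1 - q)) := by
    simpa [div_eq_mul_inv] using (hasSum_geometric_of_lt_one hq₀ hq₁).mul_left C
  have hsum : ∀ z, Summable fun n => g (r^[n] z) := fun z =>
    .of_norm_bounded (hgeom.summable.mul_right ‖z‖) (hterm · z)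
  refine ⟨fun z => ∑' n, g (r^[n] z), ?_, fun z => ?_, fun z => ?_⟩
  · exact continuous_tsum_of_norm_le_mul_norm
      (fun n => hg.comp ((continuous_id.sub (T.continuous.comp hg)).iterate n))
      (fun n => by positivity) hgeom.summable hterm
  · have hpartial : ∀ N, ∑ n ∈ Finset.range N, T (g (r^[n] z)) = z - r^[N] z := fun N => by
      have hstep : ∀ n, T (g (r^[n] z)) = r^[n] z - r^[n + 1] z := fun n => by
        rw [Function.iterate_succ_apply']
        simp [r]
      simp only [hstep, Finset.sum_range_sub', Function.iterate_zero_apply]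
    have hr0 : Tendsto (fun N => r^[N] z) atTop (𝓝 0) := by
      refine squeeze_zero_norm (norm_iterate_le_of_norm_le hq₀ hgT · z) ?_
      simpa using (tendsto_pow_atTop_nhds_zero_of_lt_one hq₀ hq₁).mul_const ‖z‖
    rw [T.map_tsum (hsum z)]
    refine (((hsum z).mapL T).hasSum_iff_tendsto_nat.2 ?_).tsum_eq
    simpa [hpartial] using tendsto_const_nhds.sub hr0
  · exact tsum_of_norm_bounded (hgeom.mul_right ‖z‖) (hterm · z)

end

end ContinuousLinearMap

/-- Bartle–Graves selection theorem with a norm bound. -/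
theorem stmt_2 {W Z : Type*} [NormedAddCommGroup W] [NormedSpace ℝ W] [CompleteSpace W]
    [NormedAddCommGroup Z] [NormedSpace ℝ Z] [CompleteSpace Z]
    (T : W →L[ℝ] Z) (hT : Function.Surjective T) :
    ∃ (B : Z → W) (M : ℝ), 1 < M ∧ Continuous B ∧
      (∀ z : Z, T (B z) = z) ∧ (∀ z : Z, ‖B z‖ ≤ M * ‖z‖) := by
  obtain ⟨g, C, hC, hg, hgC, hgT⟩ :=
    T.exists_continuous_approx_preimage_norm_le hT (q := 1 / 2) (by norm_num)
  obtain ⟨B, hB, hTB, hBC⟩ :=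
    T.exists_continuous_preimage_norm_le_of_approx hC (by norm_num) (by norm_num) hg hgC hgT
  refine ⟨B, 2 * C + 2, by linarith, hB, hTB, fun z => (hBC z).trans ?_⟩
  gcongr
  linarith [show C / (1 - 1 / 2) = 2 * C by ring]
end
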